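/- arXiv:2405.13953 — 2 statements merged into one kernel-verified Lean document; each statement's English description precedes it below -/
import Mathlib

section
/- Bound |u| ≤ 1 for entire critical points: Let n ≥ 2 and ε > 0. If (u,α) is a critical point of E_ε on all of ℝⁿ, then |u(x)| ≤ 1 for every x ∈ ℝⁿ. -/
open MeasureTheory Metric Filter

noncomputable section

abbrev Euc (n : ℕ) := EuclideanSpace ℝ (Fin n)

/-- The `j`-th standard coordinate vector of `ℝⁿ`. -/
def stdVec (n : ℕ) (j : Fin n) : Euc n := EuclideanSpace.single j 1

/-- The standard basis, as a family indexed by `ℕ` (zero beyond `n`). -/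
def stdFam (n : ℕ) : ℕ → Euc n := fun k => if h : k < n then stdVec n ⟨k, h⟩ else 0

/-- The real inner product `⟨z,w⟩ = Re (z ⬝ conj w)` of two complex numbers. -/
def cdot (z w : ℂ) : ℝ := (z * (starRingEnd ℂ w)).re

/-- Covariant derivative `∇_j u = ∂_j u - i α_j u`. -/
def covD (n : ℕ) (u : Euc n → ℂ) (α : Euc n → Fin n → ℝ) (j : Fin n) (x : Euc n) : ℂ :=
  fderiv ℝ u x (stdVec n j) - Complex.I * (α x j : ℂ) * u x

/-- Curvature `ω_{jk} = ∂_j α_k - ∂_k α_j`. -/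
def curv (n : ℕ) (α : Euc n → Fin n → ℝ) (j k : Fin n) (x : Euc n) : ℝ :=
  fderiv ℝ (fun y => α y k) x (stdVec n j) - fderiv ℝ (fun y => α y j) x (stdVec n k)

/-- `|∇u|²`. -/
def gradSq (n : ℕ) (u : Euc n → ℂ) (α : Euc n → Fin n → ℝ) (x : Euc n) : ℝ :=
  ∑ j : Fin n, ‖covD n u α j x‖ ^ 2

/-- `|ω|²`. -/
def curvSq (n : ℕ) (α : Euc n → Fin n → ℝ) (x : Euc n) : ℝ :=
  ∑ j : Fin n, ∑ k : Fin n, if j < k then (curv n α j k x) ^ 2 else 0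

/-- Energy density `e_ε(u,α)`. -/
def eDen (n : ℕ) (ε : ℝ) (u : Euc n → ℂ) (α : Euc n → Fin n → ℝ) (x : Euc n) : ℝ :=
  gradSq n u α x + ε ^ 2 * curvSq n α x + (1 - ‖u x‖ ^ 2) ^ 2 / (4 * ε ^ 2)

/-- Smoothness of the pair `(u, α)`. -/
def SmoothPair (n : ℕ) (u : Euc n → ℂ) (α : Euc n → Fin n → ℝ) : Prop :=
  ContDiff ℝ (⊤ : ℕ∞) u ∧ ∀ j : Fin n, ContDiff ℝ (⊤ : ℕ∞) (fun x => α x j)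

/-- `(u,α)` is a (smooth) critical point of `E_ε` on `U`. -/
def IsCritical (n : ℕ) (ε : ℝ) (u : Euc n → ℂ) (α : Euc n → Fin n → ℝ) (U : Set (Euc n)) :
    Prop :=
  SmoothPair n u α ∧ ∀ x ∈ U,
    (-(∑ j : Fin n, covD n (fun y => covD n u α j y) α j x)
        = ((1 / (2 * ε ^ 2) * (1 - ‖u x‖ ^ 2) : ℝ) : ℂ) * u x) ∧
    ∀ k : Fin n,
      -(ε ^ 2 * ∑ j : Fin n, fderiv ℝ (fun y => curv n α j k y) x (stdVec n j))
        = cdot (covD n u α k x) (Complex.I * u x)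

/-- Pointwise bounds (P). -/
def BoundsP (n : ℕ) (ε : ℝ) (u : Euc n → ℂ) (α : Euc n → Fin n → ℝ) (U : Set (Euc n)) : Prop :=
  ∀ x ∈ U, ‖u x‖ ≤ 1 ∧ ε * Real.sqrt (curvSq n α x) ≤ (1 - ‖u x‖ ^ 2) / (2 * ε) ∧
    Real.sqrt (gradSq n u α x) ≤ (1 - ‖u x‖ ^ 2) / ε

/-- Directional covariant derivative `∇_v u`. -/
def covDVec (n : ℕ) (u : Euc n → ℂ) (α : Euc n → Fin n → ℝ) (v : Euc n) (x : Euc n) : ℂ :=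
  ∑ j : Fin n, (v j : ℂ) * covD n u α j x

/-- Curvature evaluated on two vectors, `ω(v,w)`. -/
def curvVec (n : ℕ) (α : Euc n → Fin n → ℝ) (v w : Euc n) (x : Euc n) : ℝ :=
  ∑ j : Fin n, ∑ k : Fin n, v j * w k * curv n α j k x

/-- Integrand of the excess `𝐄₁` with respect to the orthonormal family `e`. -/
def exDen1 (n : ℕ) (ε : ℝ) (u : Euc n → ℂ) (α : Euc n → Fin n → ℝ) (e : ℕ → Euc n)
    (x : Euc n) : ℝ :=
  (∑ k ∈ Finset.Ico 2 n, ‖covDVec n u α (e k) x‖ ^ 2) +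
    ε ^ 2 * ∑ j ∈ Finset.range n, ∑ k ∈ Finset.Ico (j + 1) n,
      if j = 0 ∧ k = 1 then 0 else (curvVec n α (e j) (e k) x) ^ 2

/-- Integrand of the excess `𝐄₂` with respect to the orthonormal family `e`. -/
def exDen2 (n : ℕ) (ε : ℝ) (u : Euc n → ℂ) (α : Euc n → Fin n → ℝ) (e : ℕ → Euc n)
    (x : Euc n) : ℝ :=
  ‖covDVec n u α (e 0) x + Complex.I * covDVec n u α (e 1) x‖ ^ 2 +
    (ε * curvVec n α (e 0) (e 1) x - (1 - ‖u x‖ ^ 2) / (2 * ε)) ^ 2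

/-- The excess `𝐄₁(u,α,B_r(x₀),S)`, `S` being spanned by `e 2, …, e (n-1)`. -/
def excess1 (n : ℕ) (ε : ℝ) (u : Euc n → ℂ) (α : Euc n → Fin n → ℝ) (r : ℝ) (x₀ : Euc n)
    (e : ℕ → Euc n) : ℝ :=
  (r ^ ((2 : ℝ) - (n : ℝ)) / (2 * Real.pi)) * ∫ x in ball x₀ r, exDen1 n ε u α e x

/-- The excess `𝐄₂(u,α,B_r(x₀),S)`. -/
def excess2 (n : ℕ) (ε : ℝ) (u : Euc n → ℂ) (α : Euc n → Fin n → ℝ) (r : ℝ) (x₀ : Euc n)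
    (e : ℕ → Euc n) : ℝ :=
  (r ^ ((2 : ℝ) - (n : ℝ)) / (2 * Real.pi)) * ∫ x in ball x₀ r, exDen2 n ε u α e x

/-- The full excess `𝐄 = 𝐄₁ + 𝐄₂`. -/
def excess (n : ℕ) (ε : ℝ) (u : Euc n → ℂ) (α : Euc n → Fin n → ℝ) (r : ℝ) (x₀ : Euc n)
    (e : ℕ → Euc n) : ℝ :=
  excess1 n ε u α r x₀ e + excess2 n ε u α r x₀ e

/-- `e` restricts to an orthonormal basis of `ℝⁿ`. -/
def IsON (n : ℕ) (e : ℕ → Euc n) : Prop := Orthonormal ℝ (fun j : Fin n => e (j : ℕ))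

/-- Orthogonal projection onto the plane spanned by `e 2, …, e (n-1)`. -/
def planeProj (n : ℕ) (e : ℕ → Euc n) (x : Euc n) : Euc n :=
  ∑ k ∈ Finset.Ico 2 n, (inner ℝ (e k) x : ℝ) • e k

/-- Hilbert–Schmidt distance of two maps. -/
def hsDist (n : ℕ) (T S : Euc n → Euc n) : ℝ :=
  Real.sqrt (∑ j : Fin n, ‖T (stdVec n j) - S (stdVec n j)‖ ^ 2)

/-- Lebesgue measure of the unit ball of `ℝᵐ`. -/
def volB (m : ℕ) : ℝ := (volume (ball (0 : Euc m) 1)).toReal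

/-- Energy of the pair on the ball `B_R(0)`. -/
def energyBall (n : ℕ) (ε : ℝ) (u : Euc n → ℂ) (α : Euc n → Fin n → ℝ) (R : ℝ) : ℝ :=
  ∫ x in ball (0 : Euc n) R, eDen n ε u α x

/-- First two coordinates of a point of `ℝⁿ`. -/
def fst2 (n : ℕ) (x : Euc n) : Euc 2 :=
  (EuclideanSpace.equiv (Fin 2) ℝ).symm fun i => if h : (i : ℕ) < n then x ⟨i, h⟩ else 0

/-- Last `n - 2` coordinates of a point of `ℝⁿ`. -/
def snd2 (n : ℕ) (x : Euc n) : Euc (n - 2) :=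
  (EuclideanSpace.equiv (Fin (n - 2)) ℝ).symm fun i =>
    if h : (i : ℕ) + 2 < n then x ⟨(i : ℕ) + 2, h⟩ else 0

/-- Build a point of `ℝⁿ = ℝ² × ℝⁿ⁻²`. -/
def pairPt (n : ℕ) (y : Euc 2) (z : Euc (n - 2)) : Euc n :=
  (EuclideanSpace.equiv (Fin n) ℝ).symm fun i =>
    if h : (i : ℕ) < 2 then y ⟨i, h⟩ else z ⟨(i : ℕ) - 2, by have := i.2; omega⟩

/-- The point `R x`, for a matrix `R`. -/
def rotPt (n : ℕ) (R : Matrix (Fin n) (Fin n) ℝ) (x : Euc n) : Euc n :=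
  (EuclideanSpace.equiv (Fin n) ℝ).symm (R.mulVec (EuclideanSpace.equiv (Fin n) ℝ x))

/-- The rotated function `u ∘ R`. -/
def rotU (n : ℕ) (R : Matrix (Fin n) (Fin n) ℝ) (u : Euc n → ℂ) : Euc n → ℂ :=
  fun x => u (rotPt n R x)

/-- The rotated one-form `Rᵀ ⬝ (α ∘ R)`. -/
def rotA (n : ℕ) (R : Matrix (Fin n) (Fin n) ℝ) (α : Euc n → Fin n → ℝ) :
    Euc n → Fin n → ℝ :=
  fun x j => ∑ k : Fin n, α (rotPt n R x) k * R k j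

/-- Conjugate function. -/
def conjU (n : ℕ) (u : Euc n → ℂ) : Euc n → ℂ := fun x => starRingEnd ℂ (u x)

/-- Negated one-form. -/
def negA (n : ℕ) (α : Euc n → Fin n → ℝ) : Euc n → Fin n → ℝ := fun x j => -(α x j)

/-- The open solid cylinder `B²_{r₁} × B^{n-2}_{r₂}`. -/
def cyl (n : ℕ) (r₁ r₂ : ℝ) : Set (Euc n) := {x | ‖fst2 n x‖ < r₁ ∧ ‖snd2 n x‖ < r₂}

/-- `(u,α)` is a local minimizer of `E_ε` on `U`. -/
def IsLocalMinimizer (n : ℕ) (ε : ℝ) (u : Euc n → ℂ) (α : Euc n → Fin n → ℝ)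
    (U : Set (Euc n)) : Prop :=
  SmoothPair n u α ∧ ∀ (v : Euc n → ℂ) (β : Euc n → Fin n → ℝ), SmoothPair n v β →
    (∃ Kc : Set (Euc n), IsCompact Kc ∧ Kc ⊆ U ∧ ∀ x ∉ Kc, v x = u x ∧ β x = α x) →
    ∫⁻ x in U, ENNReal.ofReal (eDen n ε u α x) ≤ ∫⁻ x in U, ENNReal.ofReal (eDen n ε v β x)

/-! ### Auxiliary lemmas for `norm_u_le_one` -/

/-- Second derivative test: at an interior local max, the second derivative is `≤ 0`. -/
lemma aux_second_deriv_test {f f' : ℝ → ℝ} {δ : ℝ} (hδ : 0 < δ)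
    (hf : ∀ t ∈ ball (0:ℝ) δ, HasDerivAt f (f' t) t)
    {L : ℝ} (h2 : HasDerivAt f' L 0) (hmax : IsLocalMax f 0) : L ≤ 0 := by
  by_contra hL
  push_neg at hL
  have hf'0 : f' 0 = 0 := by
    have := hmax.deriv_eq_zero
    rwa [(hf 0 (by simp [hδ])).deriv] at this
  have hslope : Tendsto (fun t => f' t / t) (nhdsWithin (0:ℝ) {(0:ℝ)}ᶜ) (nhds L) := by
    have := hasDerivAt_iff_tendsto_slope.mp h2
    apply this.congr
    intro t
    simp [slope_def_field, hf'0, div_eq_div_iff]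
  have hpos : ∀ᶠ t in nhdsWithin (0:ℝ) {(0:ℝ)}ᶜ, 0 < f' t / t :=
    hslope.eventually (eventually_gt_nhds hL)
  rw [eventually_nhdsWithin_iff] at hpos
  rcases Metric.eventually_nhds_iff.mp hpos with ⟨δ', hδ', hball⟩
  rcases Metric.eventually_nhds_iff.mp hmax with ⟨δ'', hδ'', hmaxball⟩
  set δ₀ := min δ (min δ' δ'') with hδ₀def
  have hδ₀ : 0 < δ₀ := lt_min hδ (lt_min hδ' hδ'')
  have hδ₀δ : δ₀ ≤ δ := min_le_left _ _
  have hδ₀δ' : δ₀ ≤ δ' := le_trans (min_le_right _ _) (min_le_left _ _)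
  have hδ₀δ'' : δ₀ ≤ δ'' := le_trans (min_le_right _ _) (min_le_right _ _)
  have hf'pos : ∀ t ∈ Set.Ioo (0:ℝ) δ₀, 0 < f' t := by
    intro t ht
    have h1 : 0 < f' t / t := by
      apply hball _ (ne_of_gt ht.1)
      simp only [Real.dist_eq, sub_zero, abs_of_pos ht.1]
      linarith [ht.2]
    have := mul_pos h1 ht.1
    rwa [div_mul_cancel₀ _ (ne_of_gt ht.1)] at this
  have hsub : Set.Icc (0:ℝ) (δ₀/2) ⊆ ball (0:ℝ) δ := by
    intro t ht
    simp only [mem_ball, Real.dist_eq, sub_zero]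
    rw [abs_of_nonneg ht.1]; linarith [ht.2]
  have hmono : StrictMonoOn f (Set.Icc 0 (δ₀/2)) := by
    apply strictMonoOn_of_deriv_pos (convex_Icc _ _)
    · exact fun t ht => ((hf t (hsub ht)).continuousAt).continuousWithinAt
    · intro t ht
      rw [interior_Icc] at ht
      rw [(hf t (hsub ⟨le_of_lt ht.1, le_of_lt ht.2⟩)).deriv]
      exact hf'pos t ⟨ht.1, by linarith [ht.2]⟩
  have h1 : f 0 < f (δ₀/2) :=
    hmono (by constructor <;> positivity) (by constructor <;> [positivity; rfl]) (by positivity)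
  have h2' : f (δ₀/2) ≤ f 0 := by
    apply hmaxball (y := δ₀/2)
    simp only [Real.dist_eq, sub_zero, abs_of_pos (by positivity : (0:ℝ) < δ₀/2)]
    linarith
  linarith

lemma aux_line_hasDerivAt {n : ℕ} {F : Type*} [NormedAddCommGroup F] [NormedSpace ℝ F]
    (g : Euc n → F) (hg : Differentiable ℝ g) (x e : Euc n) (t : ℝ) :
    HasDerivAt (fun s => g (x + s • e)) (fderiv ℝ g (x + t • e) e) t := by
  have h1 : HasDerivAt (fun s : ℝ => x + s • e) e t := by
    simpa using ((hasDerivAt_id t).smul_const e).const_add x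
  exact ((hg _).hasFDerivAt.comp_hasDerivAt t h1)

lemma aux_re_hasDerivAt {f : ℝ → ℂ} {f' : ℂ} {t : ℝ} (hf : HasDerivAt f f' t) :
    HasDerivAt (fun s => (f s).re) f'.re t := by
  exact (Complex.reCLM.hasFDerivAt.comp_hasDerivAt t hf)

lemma aux_conj_hasDerivAt {f : ℝ → ℂ} {f' : ℂ} {t : ℝ} (hf : HasDerivAt f f' t) :
    HasDerivAt (fun s => (starRingEnd ℂ) (f s)) ((starRingEnd ℂ) f') t := by
  exact (Complex.conjCLE.hasFDerivAt.comp_hasDerivAt t hf)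

lemma aux_cdot_hasDerivAt {f g : ℝ → ℂ} {f' g' : ℂ} {t : ℝ}
    (hf : HasDerivAt f f' t) (hg : HasDerivAt g g' t) :
    HasDerivAt (fun s => cdot (f s) (g s)) (cdot f' (g t) + cdot (f t) g') t := by
  have := aux_re_hasDerivAt (hf.mul (aux_conj_hasDerivAt hg))
  convert this using 1
  all_goals rfl

lemma aux_norm_sq_eq_cdot (z : ℂ) : ‖z‖ ^ 2 = cdot z z := by
  simp [cdot, Complex.mul_conj, ← Complex.normSq_eq_norm_sq]

lemma aux_cdot_sum_left {ι : Type*} (s : Finset ι) (f : ι → ℂ) (B : ℂ) :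
    cdot (∑ i ∈ s, f i) B = ∑ i ∈ s, cdot (f i) B := by
  simp [cdot, Finset.sum_mul, Complex.re_sum]

lemma aux_normSq_line {n : ℕ} (u : Euc n → ℂ) (hu : Differentiable ℝ u) (x e : Euc n) (t : ℝ) :
    HasDerivAt (fun s => ‖u (x + s • e)‖ ^ 2)
      (2 * cdot (fderiv ℝ u (x + t • e) e) (u (x + t • e))) t := by
  have h := aux_cdot_hasDerivAt (aux_line_hasDerivAt u hu x e t) (aux_line_hasDerivAt u hu x e t)
  simp only [aux_norm_sq_eq_cdot]
  convert h using 1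
  simp [cdot, Complex.mul_re, Complex.conj_re, Complex.conj_im]
  ring

lemma aux_contDiff_p {n : ℕ} {u : Euc n → ℂ} (hu : ContDiff ℝ (⊤:ℕ∞) u) (e : Euc n) :
    ContDiff ℝ (⊤:ℕ∞) (fun y => fderiv ℝ u y e) :=
  (hu.fderiv_right (by exact_mod_cast le_top)).clm_apply contDiff_const

lemma aux_H_line_deriv2 {n : ℕ} {u : Euc n → ℂ} (hu : ContDiff ℝ (⊤:ℕ∞) u) (x e : Euc n) :
    HasDerivAt (fun t : ℝ => 2 * cdot (fderiv ℝ u (x + t • e) e) (u (x + t • e)))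
      (2 * (cdot (fderiv ℝ (fun y => fderiv ℝ u y e) x e) (u x) + ‖fderiv ℝ u x e‖ ^ 2)) 0 := by
  have hud : Differentiable ℝ u := hu.differentiable (by simp)
  have hpd : Differentiable ℝ (fun y => fderiv ℝ u y e) :=
    (aux_contDiff_p hu e).differentiable (by simp)
  have h1 := aux_line_hasDerivAt (fun y => fderiv ℝ u y e) hpd x e 0
  have h2 := aux_line_hasDerivAt u hud x e 0
  have h := (aux_cdot_hasDerivAt h1 h2).const_mul 2
  simp only [zero_smul, add_zero] at h
  rw [aux_norm_sq_eq_cdot]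
  exact h

section pde
variable {n : ℕ} {u : Euc n → ℂ} {α : Euc n → Fin n → ℝ}

/-- `∂_j (covD_j u)` computed. -/
lemma aux_fderiv_covD_apply (hu : ContDiff ℝ (⊤:ℕ∞) u)
    (hα : ∀ j, ContDiff ℝ (⊤:ℕ∞) (fun x => α x j)) (j : Fin n) (x : Euc n) :
    fderiv ℝ (fun y => covD n u α j y) x (stdVec n j)
      = fderiv ℝ (fun y => fderiv ℝ u y (stdVec n j)) x (stdVec n j)
        - Complex.I * ((fderiv ℝ (fun y => α y j) x (stdVec n j) : ℝ) : ℂ) * u x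
        - Complex.I * (α x j : ℂ) * (fderiv ℝ u x (stdVec n j)) := by
  have hp : ContDiff ℝ (⊤:ℕ∞) (fun y => fderiv ℝ u y (stdVec n j)) :=
    (hu.fderiv_right (by exact_mod_cast le_top)).clm_apply contDiff_const
  have hP : HasFDerivAt (fun y => fderiv ℝ u y (stdVec n j))
      (fderiv ℝ (fun y => fderiv ℝ u y (stdVec n j)) x) x :=
    ((hp.differentiable (by simp)) x).hasFDerivAt
  have hAj : HasFDerivAt (fun y => α y j) (fderiv ℝ (fun y => α y j) x) x :=
    (((hα j).differentiable (by simp)) x).hasFDerivAt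
  have hcast : HasFDerivAt (fun y => ((α y j : ℝ) : ℂ))
      (Complex.ofRealCLM.comp (fderiv ℝ (fun y => α y j) x)) x :=
    Complex.ofRealCLM.hasFDerivAt.comp x hAj
  have hU : HasFDerivAt u (fderiv ℝ u x) x :=
    ((hu.differentiable (by simp)) x).hasFDerivAt
  have hmul1 := hcast.mul hU
  have hmul2 := hmul1.const_mul Complex.I
  have hcov : (fun y => covD n u α j y)
      = fun y => fderiv ℝ u y (stdVec n j) - Complex.I * (((α y j : ℝ):ℂ) * u y) := by
    funext y; simp [covD, mul_assoc]
  have hsub : HasFDerivAt (fun y => fderiv ℝ u y (stdVec n j) - Complex.I * (((α y j : ℝ):ℂ) * u y)) _ x :=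
    hP.sub hmul2
  rw [hcov, hsub.fderiv]
  simp [mul_assoc]
  ring

/-- The key algebraic identity per component. -/
lemma aux_cdot_component (A B P : ℂ) (a d : ℝ) :
    cdot A B + cdot P P
      = cdot (P - Complex.I * (a:ℂ) * B) (P - Complex.I * (a:ℂ) * B)
        + cdot ((A - Complex.I * (d:ℂ) * B - Complex.I * (a:ℂ) * P)
            - Complex.I * (a:ℂ) * (P - Complex.I * (a:ℂ) * B)) B := by
  simp [cdot, Complex.mul_re, Complex.mul_im, Complex.conj_re, Complex.conj_im]
  ring

/-- Laplacian of `‖u‖²` at `x`, in terms of the equation. -/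
lemma aux_lap_identity {ε : ℝ} (hε : 0 < ε)
    (hu : ContDiff ℝ (⊤:ℕ∞) u) (hα : ∀ j, ContDiff ℝ (⊤:ℕ∞) (fun x => α x j)) (x : Euc n)
    (heq : -(∑ j : Fin n, covD n (fun y => covD n u α j y) α j x)
        = ((1 / (2 * ε ^ 2) * (1 - ‖u x‖ ^ 2) : ℝ) : ℂ) * u x) :
    ∑ j : Fin n, (cdot (fderiv ℝ (fun y => fderiv ℝ u y (stdVec n j)) x (stdVec n j)) (u x)
        + ‖fderiv ℝ u x (stdVec n j)‖ ^ 2)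
      = gradSq n u α x + ‖u x‖ ^ 2 * (‖u x‖ ^ 2 - 1) / (2 * ε ^ 2) := by
  have hsum : ∑ j : Fin n, covD n (fun y => covD n u α j y) α j x
      = -(((1 / (2 * ε ^ 2) * (1 - ‖u x‖ ^ 2) : ℝ) : ℂ) * u x) := by
    rw [← heq]; ring
  have hterm : ∀ j : Fin n,
      cdot (fderiv ℝ (fun y => fderiv ℝ u y (stdVec n j)) x (stdVec n j)) (u x)
        + ‖fderiv ℝ u x (stdVec n j)‖ ^ 2
      = ‖covD n u α j x‖ ^ 2 + cdot (covD n (fun y => covD n u α j y) α j x) (u x) := by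
    intro j
    have h1 : covD n (fun y => covD n u α j y) α j x
        = (fderiv ℝ (fun y => fderiv ℝ u y (stdVec n j)) x (stdVec n j)
            - Complex.I * ((fderiv ℝ (fun y => α y j) x (stdVec n j) : ℝ) : ℂ) * u x
            - Complex.I * (α x j : ℂ) * (fderiv ℝ u x (stdVec n j)))
          - Complex.I * (α x j : ℂ) * covD n u α j x := by
      rw [covD]
      rw [aux_fderiv_covD_apply hu hα j x]
    rw [h1, aux_norm_sq_eq_cdot, aux_norm_sq_eq_cdot, covD]
    exact aux_cdot_component _ _ _ _ _
  rw [Finset.sum_congr rfl (fun j _ => hterm j), Finset.sum_add_distrib, ← aux_cdot_sum_left,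
    hsum, gradSq]
  have hc : ∀ (r : ℝ) (z w : ℂ), cdot (-((r:ℂ) * z)) w = -(r * cdot z w) := by
    intro r z w
    simp [cdot, Complex.mul_re, Complex.mul_im]
    ring
  rw [hc]
  rw [← aux_norm_sq_eq_cdot]
  field_simp
  ring

end pde

section vline
variable (K a b R : ℝ)

/-- The quadratic `R² - ‖x₁ + t e - x₀‖²` along a line. -/
def qq (t : ℝ) : ℝ := R^2 - (a + 2*b*t + t^2)

lemma qq_hasDerivAt (t : ℝ) : HasDerivAt (qq a b R) (-(2*b + 2*t)) t := by
  have h1 : HasDerivAt (fun s:ℝ => a + 2*b*s + s^2) (2*b + 2*t) t := by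
    have := (((hasDerivAt_id t).const_mul (2*b)).const_add a).add (hasDerivAt_pow 2 t)
    simpa [Pi.add_def] using this
  exact h1.const_sub (R^2)

lemma aux_vline_deriv1 (t : ℝ) (hq : qq a b R t ≠ 0) :
    HasDerivAt (fun s => K / (qq a b R s)^2)
      (K * (2 * qq a b R t * (2*b + 2*t) / ((qq a b R t)^2)^2)) t := by
  have h2 := (qq_hasDerivAt a b R t).pow 2
  have h3 := h2.inv (pow_ne_zero 2 hq)
  have h4 := h3.const_mul K
  simp only [Pi.pow_apply, Pi.inv_apply] at h4
  have : (fun s => K * ((qq a b R s)^2)⁻¹) = fun s => K / (qq a b R s)^2 := by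
    funext s; rw [div_eq_mul_inv]
  rw [this] at h4
  refine h4.congr_deriv ?_
  push_cast
  ring

lemma aux_vline_deriv2 (hq : qq a b R 0 ≠ 0) :
    HasDerivAt (fun t => K * (2 * qq a b R t * (2*b + 2*t) / ((qq a b R t)^2)^2))
      (24 * K * b^2 / (qq a b R 0)^4 + 4 * K / (qq a b R 0)^3) 0 := by
  have hA : HasDerivAt (fun t : ℝ => 2 * qq a b R t * (2*b + 2*t))
      (2 * (-(2*b)) * (2*b) + 2 * qq a b R 0 * 2) 0 := by
    have := ((qq_hasDerivAt a b R 0).const_mul 2).mul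
      (((hasDerivAt_id (0:ℝ)).const_mul 2).const_add (2*b))
    simp only [id_eq, Pi.mul_def] at this
    refine this.congr_deriv ?_
    all_goals ring
  have hC : HasDerivAt (fun t : ℝ => (((qq a b R t)^2)^2)⁻¹)
      (-(2 * ((qq a b R 0)^2)^1 * (2 * (qq a b R 0)^1 * (-(2*b)))) / (((qq a b R 0)^2)^2)^2)
      0 := by
    have := (((qq_hasDerivAt a b R 0).pow 2).pow 2).inv (pow_ne_zero 2 (pow_ne_zero 2 hq))
    refine this.congr_deriv ?_
    norm_num
  have h := (hA.mul hC).const_mul K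
  have heq : (fun t => K * (2 * qq a b R t * (2*b + 2*t) * (((qq a b R t)^2)^2)⁻¹))
      = fun t => K * (2 * qq a b R t * (2*b + 2*t) / ((qq a b R t)^2)^2) := by
    funext s; rw [div_eq_mul_inv]
  simp only [Pi.mul_apply] at h
  rw [heq] at h
  refine h.congr_deriv ?_
  have h0 : ((qq a b R 0)^2)^2 ≠ 0 := pow_ne_zero 2 (pow_ne_zero 2 hq)
  field_simp
  ring
end vline

lemma aux_norm_stdVec {n : ℕ} (j : Fin n) : ‖stdVec n j‖ = 1 := by
  simp [stdVec, EuclideanSpace.norm_single]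

lemma aux_qfact {n : ℕ} (x₁ x₀ e : Euc n) (he : ‖e‖ = 1) (t : ℝ) :
    ‖x₁ + t • e - x₀‖ ^ 2
      = ‖x₁ - x₀‖ ^ 2 + 2 * (inner ℝ (x₁ - x₀) e : ℝ) * t + t ^ 2 := by
  have h1 : x₁ + t • e - x₀ = (x₁ - x₀) + t • e := by abel
  rw [h1, norm_add_sq_real, real_inner_smul_right, norm_smul]
  simp [he, sq_abs]
  ring

lemma aux_sum_inner_stdVec_sq {n : ℕ} (y : Euc n) :
    ∑ j : Fin n, (inner ℝ y (stdVec n j) : ℝ) ^ 2 = ‖y‖ ^ 2 := by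
  have h : ∀ j : Fin n, (inner ℝ y (stdVec n j) : ℝ) = y j := by
    intro j
    simp [stdVec, EuclideanSpace.inner_single_right]
  simp only [h]
  rw [EuclideanSpace.norm_eq, Real.sq_sqrt (by positivity)]
  simp [Real.norm_eq_abs, sq_abs]

set_option maxHeartbeats 1000000 in
/-- Key estimate: on a ball of radius `R`, comparison with the Keller–Osserman
supersolution gives `‖u x₀‖² - 1 ≤ (24 + 4n) ε² / R²`. -/
lemma aux_key {n : ℕ} {ε : ℝ} (hε : 0 < ε) {u : Euc n → ℂ} {α : Euc n → Fin n → ℝ}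
    (hu : ContDiff ℝ (⊤:ℕ∞) u) (hα : ∀ j, ContDiff ℝ (⊤:ℕ∞) (fun x => α x j))
    (hpde : ∀ x : Euc n, -(∑ j : Fin n, covD n (fun y => covD n u α j y) α j x)
        = ((1 / (2 * ε ^ 2) * (1 - ‖u x‖ ^ 2) : ℝ) : ℂ) * u x)
    (x₀ : Euc n) {R : ℝ} (hR : 0 < R) :
    ‖u x₀‖ ^ 2 - 1 ≤ (24 + 4 * (n:ℝ)) * ε ^ 2 / R ^ 2 := by
  by_contra hcon
  push_neg at hcon
  obtain ⟨K, hKdef⟩ : ∃ K : ℝ, K = (24 + 4 * (n:ℝ)) * ε ^ 2 * R ^ 2 := ⟨_, rfl⟩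
  have hK : 0 < K := by rw [hKdef]; positivity
  -- G x₀ > 1
  have hVx₀ : K / (R^2 - ‖x₀ - x₀‖^2)^2 = (24 + 4 * (n:ℝ)) * ε ^ 2 / R ^ 2 := by
    rw [sub_self, norm_zero, hKdef]
    field_simp
    ring
  have hGx₀ : 1 < ‖u x₀‖^2 - K / (R^2 - ‖x₀ - x₀‖^2)^2 := by
    rw [hVx₀]; linarith
  -- bound on H over the closed ball
  obtain ⟨C, hC⟩ := (isCompact_closedBall x₀ R).exists_bound_of_continuousOn
    ((hu.continuous.norm.pow 2).continuousOn)
  have hC0 : 0 ≤ C := le_trans (norm_nonneg _) (hC x₀ (mem_closedBall_self hR.le))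
  have hHleC : ∀ x ∈ closedBall x₀ R, ‖u x‖^2 ≤ C := fun x hx =>
    le_trans (le_abs_self _) (hC x hx)
  -- choice of the inner radius r
  obtain ⟨η, hηdef⟩ : ∃ η : ℝ, η = K / (C + 1 + K / R^4) := ⟨_, rfl⟩
  have hdenpos : 0 < C + 1 + K / R^4 := by
    have : 0 < K / R^4 := div_pos hK (by positivity)
    linarith
  have hηpos : 0 < η := by rw [hηdef]; exact div_pos hK hdenpos
  obtain ⟨m, hmdef⟩ : ∃ m : ℝ, m = min (Real.sqrt η) (R^2) := ⟨_, rfl⟩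
  have hm : 0 < m := by
    rw [hmdef]; exact lt_min (Real.sqrt_pos.mpr hηpos) (by positivity)
  have hmR : m ≤ R^2 := by rw [hmdef]; exact min_le_right _ _
  have hmη : m ≤ Real.sqrt η := by rw [hmdef]; exact min_le_left _ _
  obtain ⟨r, hrdef⟩ : ∃ r : ℝ, r = Real.sqrt (R^2 - m) := ⟨_, rfl⟩
  have hr0 : 0 ≤ r := by rw [hrdef]; exact Real.sqrt_nonneg _
  have hr2 : r^2 = R^2 - m := by rw [hrdef]; exact Real.sq_sqrt (by linarith)
  have hrR : r < R := by nlinarith [hr2, hm, hr0]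
  -- on the annulus, G is very negative
  have hann : ∀ x : Euc n, ‖x - x₀‖ < R → r ≤ ‖x - x₀‖ →
      ‖u x‖^2 - K / (R^2 - ‖x - x₀‖^2)^2 ≤ -1 - K / R^4 := by
    intro x hxR hxr
    have hq0 : 0 < R^2 - ‖x - x₀‖^2 := by nlinarith [norm_nonneg (x - x₀)]
    have hqm : R^2 - ‖x - x₀‖^2 ≤ m := by nlinarith
    have hq2η : (R^2 - ‖x - x₀‖^2)^2 ≤ η := by
      have h1 : R^2 - ‖x - x₀‖^2 ≤ Real.sqrt η := le_trans hqm hmη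
      nlinarith [Real.sq_sqrt hηpos.le, Real.sqrt_nonneg η]
    have hVbig : K / η ≤ K / (R^2 - ‖x - x₀‖^2)^2 :=
      div_le_div_of_nonneg_left hK.le (pow_pos hq0 2) hq2η
    have hKη : K / η = C + 1 + K / R^4 := by
      rw [hηdef, div_div_cancel₀ hK.ne']
    have hHx : ‖u x‖^2 ≤ C := hHleC x (mem_closedBall_iff_norm.mpr hxR.le)
    rw [hKη] at hVbig
    linarith
  -- maximum over the inner closed ball
  have hGcont : ContinuousOn (fun x => ‖u x‖^2 - K / (R^2 - ‖x - x₀‖^2)^2)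
      (closedBall x₀ r) := by
    have hden : Continuous fun x : Euc n => (R^2 - ‖x - x₀‖^2)^2 :=
      (continuous_const.sub (((continuous_id.sub continuous_const).norm.pow 2))).pow 2
    refine ((hu.continuous.norm.pow 2).continuousOn).sub
      (ContinuousOn.div continuousOn_const hden.continuousOn ?_)
    intro x hx
    have hxr : ‖x - x₀‖ ≤ r := mem_closedBall_iff_norm.mp hx
    have hpos : 0 < R^2 - ‖x - x₀‖^2 := by nlinarith [norm_nonneg (x - x₀)]
    exact pow_ne_zero 2 (ne_of_gt hpos)
  obtain ⟨x₁, hx₁mem, hx₁max⟩ := (isCompact_closedBall x₀ r).exists_isMaxOn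
    ⟨x₀, mem_closedBall_self hr0⟩ hGcont
  have hx₁r : ‖x₁ - x₀‖ ≤ r := mem_closedBall_iff_norm.mp hx₁mem
  have hGx₁ : 1 < ‖u x₁‖^2 - K / (R^2 - ‖x₁ - x₀‖^2)^2 :=
    lt_of_lt_of_le hGx₀ (hx₁max (mem_closedBall_self hr0))
  -- G x ≤ G x₁ on the whole ball
  have hglobal : ∀ x : Euc n, ‖x - x₀‖ < R →
      ‖u x‖^2 - K / (R^2 - ‖x - x₀‖^2)^2
        ≤ ‖u x₁‖^2 - K / (R^2 - ‖x₁ - x₀‖^2)^2 := by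
    intro x hxR
    by_cases hxr : ‖x - x₀‖ ≤ r
    · exact hx₁max (mem_closedBall_iff_norm.mpr hxr)
    · push_neg at hxr
      have h1 := hann x hxR hxr.le
      have hKR4 : 0 < K / R^4 := div_pos hK (by positivity)
      linarith
  -- abbreviations at the max point
  obtain ⟨a, hadef⟩ : ∃ a : ℝ, a = ‖x₁ - x₀‖^2 := ⟨_, rfl⟩
  obtain ⟨c₀, hc₀def⟩ : ∃ c₀ : ℝ, c₀ = R^2 - a := ⟨_, rfl⟩
  have ha0 : 0 ≤ a := by rw [hadef]; positivity
  have haR : a ≤ R^2 - m := by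
    rw [hadef]; nlinarith [hx₁r, hr2, norm_nonneg (x₁ - x₀), hr0]
  have hc₀pos : 0 < c₀ := by rw [hc₀def]; linarith
  have hc₀R : c₀ ≤ R^2 := by rw [hc₀def]; linarith
  obtain ⟨δ, hδdef⟩ : ∃ δ : ℝ, δ = R - r := ⟨_, rfl⟩
  have hδpos : 0 < δ := by rw [hδdef]; linarith
  -- per-direction second derivative inequality
  have hper : ∀ j : Fin n,
      2 * (cdot (fderiv ℝ (fun y => fderiv ℝ u y (stdVec n j)) x₁ (stdVec n j)) (u x₁)
          + ‖fderiv ℝ u x₁ (stdVec n j)‖ ^ 2)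
        ≤ 24 * K * ((inner ℝ (x₁ - x₀) (stdVec n j) : ℝ))^2 / c₀^4 + 4 * K / c₀^3 := by
    intro j
    obtain ⟨e, hedef⟩ : ∃ e : Euc n, e = stdVec n j := ⟨_, rfl⟩
    obtain ⟨b, hbdef⟩ : ∃ b : ℝ, b = (inner ℝ (x₁ - x₀) e : ℝ) := ⟨_, rfl⟩
    have hnorme : ‖e‖ = 1 := by rw [hedef]; exact aux_norm_stdVec j
    have hqeq : ∀ t : ℝ, qq a b R t = R^2 - ‖x₁ + t • e - x₀‖^2 := by
      intro t
      rw [qq, aux_qfact x₁ x₀ e hnorme t, hadef, hbdef]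
    have hline : ∀ t : ℝ, |t| < δ → ‖x₁ + t • e - x₀‖ < R := by
      intro t ht
      have h1 : x₁ + t • e - x₀ = (x₁ - x₀) + t • e := by abel
      calc ‖x₁ + t • e - x₀‖ ≤ ‖x₁ - x₀‖ + ‖t • e‖ := by rw [h1]; exact norm_add_le _ _
        _ = ‖x₁ - x₀‖ + |t| := by rw [norm_smul, hnorme, Real.norm_eq_abs, mul_one]
        _ < r + δ := by linarith [hx₁r, ht]
        _ = R := by rw [hδdef]; ring
    have hqpos : ∀ t : ℝ, |t| < δ → 0 < qq a b R t := by
      intro t ht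
      rw [hqeq t]
      nlinarith [hline t ht, norm_nonneg (x₁ + t • e - x₀)]
    have hq00 : qq a b R 0 = c₀ := by rw [qq, hc₀def]; ring
    have hq0ne : qq a b R 0 ≠ 0 := by rw [hq00]; exact ne_of_gt hc₀pos
    -- first derivative on the ball
    have hud : Differentiable ℝ u := hu.differentiable (by simp)
    have hf : ∀ t ∈ ball (0:ℝ) δ,
        HasDerivAt (fun s => ‖u (x₁ + s • e)‖^2 - K / (qq a b R s)^2)
          (2 * cdot (fderiv ℝ u (x₁ + t • e) e) (u (x₁ + t • e))
            - K * (2 * qq a b R t * (2*b + 2*t) / ((qq a b R t)^2)^2)) t := by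
      intro t ht
      have htδ : |t| < δ := by simpa [Real.dist_eq] using ht
      exact (aux_normSq_line u hud x₁ e t).sub
        (aux_vline_deriv1 K a b R t (ne_of_gt (hqpos t htδ)))
    -- second derivative at 0
    have hf2 : HasDerivAt (fun t => 2 * cdot (fderiv ℝ u (x₁ + t • e) e) (u (x₁ + t • e))
          - K * (2 * qq a b R t * (2*b + 2*t) / ((qq a b R t)^2)^2))
        (2 * (cdot (fderiv ℝ (fun y => fderiv ℝ u y e) x₁ e) (u x₁) + ‖fderiv ℝ u x₁ e‖ ^ 2)
          - (24 * K * b^2 / (qq a b R 0)^4 + 4 * K / (qq a b R 0)^3)) 0 :=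
      (aux_H_line_deriv2 hu x₁ e).sub (aux_vline_deriv2 K a b R hq0ne)
    -- local max at 0
    have hmax : IsLocalMax (fun t => ‖u (x₁ + t • e)‖^2 - K / (qq a b R t)^2) 0 := by
      rw [IsLocalMax, IsMaxFilter]
      rw [Metric.eventually_nhds_iff]
      refine ⟨δ, hδpos, fun t ht => ?_⟩
      have htδ : |t| < δ := by simpa [Real.dist_eq] using ht
      have h1 := hglobal (x₁ + t • e) (hline t htδ)
      simp only [hqeq]
      simpa using h1
    have hkey := aux_second_deriv_test hδpos hf hf2 hmax
    rw [hq00] at hkey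
    rw [hedef] at hkey
    rw [hbdef, hedef] at *
    linarith
  -- sum the inequalities and use the PDE
  have hsumL : ∑ j : Fin n,
      2 * (cdot (fderiv ℝ (fun y => fderiv ℝ u y (stdVec n j)) x₁ (stdVec n j)) (u x₁)
        + ‖fderiv ℝ u x₁ (stdVec n j)‖ ^ 2)
      = 2 * gradSq n u α x₁ + ‖u x₁‖^2 * (‖u x₁‖^2 - 1) / ε^2 := by
    rw [← Finset.mul_sum, aux_lap_identity hε hu hα x₁ (hpde x₁)]
    field_simp
  have hsumR : ∑ j : Fin n,
      (24 * K * ((inner ℝ (x₁ - x₀) (stdVec n j) : ℝ))^2 / c₀^4 + 4 * K / c₀^3)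
      = 24 * K * a / c₀^4 + (n:ℝ) * (4 * K / c₀^3) := by
    rw [Finset.sum_add_distrib, Finset.sum_const, Finset.card_univ, Fintype.card_fin]
    have h1 : ∑ j : Fin n, 24 * K * ((inner ℝ (x₁ - x₀) (stdVec n j) : ℝ))^2 / c₀^4
        = 24 * K * a / c₀^4 := by
      rw [hadef, ← aux_sum_inner_stdVec_sq (x₁ - x₀), Finset.mul_sum, Finset.sum_div]
    rw [h1]
    simp [nsmul_eq_mul]
  have hmain : 2 * gradSq n u α x₁ + ‖u x₁‖^2 * (‖u x₁‖^2 - 1) / ε^2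
      ≤ 24 * K * a / c₀^4 + (n:ℝ) * (4 * K / c₀^3) := by
    rw [← hsumL, ← hsumR]
    exact Finset.sum_le_sum (fun j _ => hper j)
  -- final contradiction
  have hgrad : 0 ≤ gradSq n u α x₁ :=
    Finset.sum_nonneg (fun j _ => by positivity)
  have hP1 : K / c₀^2 < ‖u x₁‖^2 - 1 := by
    have h2 : K / (R^2 - ‖x₁ - x₀‖^2)^2 = K / c₀^2 := by rw [hc₀def, hadef]
    rw [h2] at hGx₁
    linarith
  have hVpos : 0 < K / c₀^2 := div_pos hK (pow_pos hc₀pos 2)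
  have hPpos : 0 < ‖u x₁‖^2 - 1 := lt_trans hVpos hP1
  have hsq : K^2 / c₀^4 < (‖u x₁‖^2 - 1)^2 := by
    have h1 : (K / c₀^2)^2 < (‖u x₁‖^2 - 1)^2 := by nlinarith
    have h2 : (K / c₀^2)^2 = K^2 / c₀^4 := by
      rw [div_pow, ← pow_mul]
    linarith
  have hHH : K^2 / c₀^4 < ‖u x₁‖^2 * (‖u x₁‖^2 - 1) := by nlinarith
  have hLHS : K^2 / c₀^4 / ε^2 < ‖u x₁‖^2 * (‖u x₁‖^2 - 1) / ε^2 :=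
    (div_lt_div_iff_of_pos_right (by positivity)).mpr hHH
  have hRHS : 24 * K * a / c₀^4 + (n:ℝ) * (4 * K / c₀^3)
      ≤ (24 + 4*(n:ℝ)) * R^2 * K / c₀^4 := by
    have heq1 : 24 * K * a / c₀^4 + (n:ℝ) * (4 * K / c₀^3)
        = (24 * K * a + 4 * (n:ℝ) * K * c₀) / c₀^4 := by
      field_simp
    rw [heq1]
    rw [div_le_div_iff_of_pos_right (pow_pos hc₀pos 4)]
    have hac : a ≤ R^2 := by linarith
    have h1 : 24 * K * a ≤ 24 * K * R^2 :=
      mul_le_mul_of_nonneg_left hac (mul_nonneg (by norm_num) hK.le)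
    have h2 : 4 * (n:ℝ) * K * c₀ ≤ 4 * (n:ℝ) * K * R^2 :=
      mul_le_mul_of_nonneg_left hc₀R
        (mul_nonneg (mul_nonneg (by norm_num) (Nat.cast_nonneg n)) hK.le)
    linarith
  have heq2 : (24 + 4*(n:ℝ)) * R^2 * K / c₀^4 = K^2 / c₀^4 / ε^2 := by
    rw [hKdef]
    field_simp
  rw [heq2] at hRHS
  linarith

/-- **The bound `|u| ≤ 1` for entire critical points**. -/
theorem norm_u_le_one (n : ℕ) (hn : 2 ≤ n) (ε : ℝ) (hε : 0 < ε)
    (u : Euc n → ℂ) (α : Euc n → Fin n → ℝ)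
    (hcrit : IsCritical n ε u α Set.univ) :
    ∀ x : Euc n, ‖u x‖ ≤ 1 := by
  obtain ⟨⟨hu, hα⟩, heqs⟩ := hcrit
  intro x
  have hpde : ∀ y : Euc n, -(∑ j : Fin n, covD n (fun z => covD n u α j z) α j y)
      = ((1 / (2 * ε ^ 2) * (1 - ‖u y‖ ^ 2) : ℝ) : ℂ) * u y :=
    fun y => (heqs y (Set.mem_univ y)).1
  have key : ∀ R : ℝ, 0 < R → ‖u x‖^2 - 1 ≤ (24 + 4*(n:ℝ)) * ε^2 / R^2 :=
    fun R hR => aux_key hε hu hα hpde x hR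
  have hsq : ‖u x‖^2 ≤ 1 := by
    by_contra hcon
    push_neg at hcon
    have hdpos : 0 < ‖u x‖^2 - 1 := by linarith
    have hCcpos : 0 < (24 + 4*(n:ℝ)) * ε^2 := by positivity
    obtain ⟨R, hRdef⟩ : ∃ R : ℝ, R = Real.sqrt (2 * ((24 + 4*(n:ℝ)) * ε^2) / (‖u x‖^2 - 1)) :=
      ⟨_, rfl⟩
    have hRpos : 0 < R := by rw [hRdef]; exact Real.sqrt_pos.mpr (by positivity)
    have hR2 : R^2 = 2 * ((24 + 4*(n:ℝ)) * ε^2) / (‖u x‖^2 - 1) := by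
      rw [hRdef]; exact Real.sq_sqrt (by positivity)
    have h1 := key R hRpos
    rw [hR2] at h1
    have h2 : (24 + 4*(n:ℝ)) * ε^2 / (2 * ((24 + 4*(n:ℝ)) * ε^2) / (‖u x‖^2 - 1))
        = (‖u x‖^2 - 1) / 2 := by
      field_simp
    rw [h2] at h1
    linarith
  nlinarith [norm_nonneg (u x), hsq]
end
end

section
/- A linear algebra lemma on pairs of planes: There exists a constant C(n) > 0 such that for any two distinct k-dimensional linear subspaces S, S′ of ℝⁿ (1 ≤ k ≤ n−1), there exist a unit vector e ∈ (S + S′) ∩ S^⊥ and vectors v ∈ S, w ∈ S′ with e = v + w and |v| ≤ C(n) ‖P_S − P_{S′}‖⁻¹ and |w| ≤ C(n) ‖P_S − P_{S′}‖⁻¹, where P_S and P_{S′} denote the orthogonal projections of ℝⁿ onto S and S′ and ‖·‖ denotes the operator norm. -/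
open MeasureTheory Metric Filter

noncomputable section

/-- Orthogonal projection of `ℝⁿ` onto a subspace, as a continuous linear map `ℝⁿ → ℝⁿ`. -/
def projE {n : ℕ} (S : Submodule ℝ (Euc n)) : Euc n →L[ℝ] Euc n :=
  S.subtypeL.comp (S.orthogonalProjection)

namespace PlanePairAux

variable {n : ℕ}

lemma projE_mem (S : Submodule ℝ (Euc n)) (x : Euc n) : projE S x ∈ S :=
  (S.orthogonalProjection x).2

lemma projE_of_mem (S : Submodule ℝ (Euc n)) {x : Euc n} (hx : x ∈ S) : projE S x = x :=
  Submodule.starProjection_eq_self_iff.2 hx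

lemma sub_projE_mem_orthogonal (S : Submodule ℝ (Euc n)) (x : Euc n) :
    x - projE S x ∈ Sᗮ :=
  Submodule.sub_starProjection_mem_orthogonal x

lemma norm_sq_eq (S : Submodule ℝ (Euc n)) (x : Euc n) :
    ‖x‖ ^ 2 = ‖projE S x‖ ^ 2 + ‖x - projE S x‖ ^ 2 := by
  have h0 : inner ℝ (projE S x) (x - projE S x) = (0 : ℝ) :=
    Submodule.inner_right_of_mem_orthogonal (projE_mem S x) (sub_projE_mem_orthogonal S x)
  have hx : x = projE S x + (x - projE S x) := by abel
  calc ‖x‖ ^ 2 = ‖projE S x + (x - projE S x)‖ ^ 2 := by rw [← hx]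
    _ = ‖projE S x‖ ^ 2 + 2 * inner ℝ (projE S x) (x - projE S x) + ‖x - projE S x‖ ^ 2 :=
        norm_add_sq_real _ _
    _ = _ := by rw [h0]; ring

lemma norm_projE_le (S : Submodule ℝ (Euc n)) (x : Euc n) : ‖projE S x‖ ≤ ‖x‖ := by
  nlinarith [norm_sq_eq S x, norm_nonneg (projE S x), norm_nonneg x,
    sq_nonneg ‖x - projE S x‖]

lemma norm_sub_projE_le (S : Submodule ℝ (Euc n)) (x : Euc n) : ‖x - projE S x‖ ≤ ‖x‖ := by
  nlinarith [norm_sq_eq S x, norm_nonneg (x - projE S x), norm_nonneg x,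
    sq_nonneg ‖projE S x‖]

lemma mem_iff_projE (S : Submodule ℝ (Euc n)) (x : Euc n) : x ∈ S ↔ projE S x = x :=
  ⟨projE_of_mem S, fun h => h ▸ projE_mem S x⟩

end PlanePairAux

set_option maxHeartbeats 1000000 in
/-- **A linear algebra lemma on pairs of planes** (Lemma 7.2 of the paper). -/
theorem plane_pair_lemma (n : ℕ) :
    ∃ C : ℝ, 0 < C ∧
    ∀ (k : ℕ) (S S' : Submodule ℝ (Euc n)),
      1 ≤ k → k ≤ n - 1 →
      Module.finrank ℝ S = k → Module.finrank ℝ S' = k →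
      S ≠ S' →
      ∃ e : Euc n, ‖e‖ = 1 ∧ e ∈ (S ⊔ S') ⊓ Sᗮ ∧
        ∃ v ∈ S, ∃ w ∈ S', e = v + w ∧
          ‖v‖ ≤ C * ‖projE S - projE S'‖⁻¹ ∧
          ‖w‖ ≤ C * ‖projE S - projE S'‖⁻¹ := by
  refine ⟨4, by norm_num, fun k S S' hk1 hk2 hSk hS'k hne => ?_⟩
  classical
  set P := projE S with hPdef
  set Q := projE S' with hQdef
  set B : Euc n →L[ℝ] Euc n := (1 - P) ∘L Q with hBdef
  have hBapp : ∀ x, B x = Q x - P (Q x) := fun x => rfl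
  set δ := ‖P - Q‖ with hδdef
  have hδpos : 0 < δ := by
    rw [hδdef, norm_pos_iff, sub_ne_zero]
    intro hPQ
    apply hne
    ext x
    rw [PlanePairAux.mem_iff_projE S x, PlanePairAux.mem_iff_projE S' x, ← hPdef, ← hQdef, hPQ]
  -- attain the norm of B on the closed unit ball
  obtain ⟨x₀, hx₀mem, hx₀max⟩ :=
    (isCompact_closedBall (0 : Euc n) 1).exists_isMaxOn
      ⟨0, mem_closedBall_self zero_le_one⟩ (B.continuous.norm.continuousOn)
  set s := ‖B x₀‖ with hsdef
  have hx₀ : ‖x₀‖ ≤ 1 := mem_closedBall_zero_iff.1 hx₀mem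
  have hBnorm : ‖B‖ ≤ s := by
    refine B.opNorm_le_bound (norm_nonneg _) fun x => ?_
    rcases eq_or_ne x 0 with rfl | hx
    · simp
    · have hxpos : 0 < ‖x‖ := norm_pos_iff.2 hx
      have h1 : ‖x‖⁻¹ • x ∈ closedBall (0 : Euc n) 1 := by
        rw [mem_closedBall_zero_iff, norm_smul, norm_inv, norm_norm,
          inv_mul_cancel₀ hxpos.ne']
      have h2 := isMaxOn_iff.1 hx₀max _ h1
      rw [_root_.map_smul, norm_smul, norm_inv, norm_norm] at h2
      calc ‖B x‖ = ‖x‖ * (‖x‖⁻¹ * ‖B x‖) := by field_simp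
        _ ≤ ‖x‖ * s := mul_le_mul_of_nonneg_left h2 (norm_nonneg x)
        _ = s * ‖x‖ := mul_comm _ _
  have hBw : ∀ w ∈ S', ‖w - P w‖ ≤ s * ‖w‖ := fun w hw => by
    have hQw : Q w = w := PlanePairAux.projE_of_mem S' hw
    calc ‖w - P w‖ = ‖B w‖ := by rw [hBapp, hQw]
      _ ≤ ‖B‖ * ‖w‖ := B.le_opNorm w
      _ ≤ s * ‖w‖ := mul_le_mul_of_nonneg_right hBnorm (norm_nonneg w)
  have hs0 : 0 < s := by
    rcases (norm_nonneg (B x₀)).lt_or_eq with h | h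
    · exact h
    · exfalso
      apply hne
      refine (Submodule.eq_of_le_of_finrank_eq (fun w hw => ?_) (hS'k.trans hSk.symm)).symm
      have h1 := hBw w hw
      rw [hsdef.trans h.symm, zero_mul] at h1
      have h2 : w = P w := by
        have h3 : w - P w = 0 := norm_le_zero_iff.1 h1
        rwa [sub_eq_zero] at h3
      rw [h2]; exact PlanePairAux.projE_mem S w
  -- operator identity and adjoint symmetry
  have hdecomp : P - Q = (P ∘L (1 - Q)) - B := by
    refine ContinuousLinearMap.ext fun x => ?_
    rw [ContinuousLinearMap.sub_apply, ContinuousLinearMap.sub_apply,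
      ContinuousLinearMap.comp_apply, ContinuousLinearMap.sub_apply,
      ContinuousLinearMap.one_apply, map_sub, hBapp]
    abel
  have hPsa : ContinuousLinearMap.adjoint P = P :=
    (isSelfAdjoint_starProjection S).adjoint_eq
  have hQsa : ContinuousLinearMap.adjoint Q = Q :=
    (isSelfAdjoint_starProjection S').adjoint_eq
  have hadj : ‖P ∘L (1 - Q)‖ = ‖(1 - Q) ∘L P‖ := by
    have h1 : ContinuousLinearMap.adjoint ((1 - Q) ∘L P) = P ∘L (1 - Q) := by
      rw [ContinuousLinearMap.adjoint_comp, hPsa, map_sub, hQsa]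
      congr 1
      rw [ContinuousLinearMap.one_def, ContinuousLinearMap.adjoint_id,
        ← ContinuousLinearMap.one_def]
    rw [← h1, LinearIsometryEquiv.norm_map]
  have hcase : δ ≤ 4 * s := by
    rcases le_or_gt (1/2 : ℝ) s with hs | hs
    · have hP1 : ‖P‖ ≤ 1 := P.opNorm_le_bound zero_le_one fun x => by
        rw [one_mul]; exact PlanePairAux.norm_projE_le S x
      have hQ1 : ‖Q‖ ≤ 1 := Q.opNorm_le_bound zero_le_one fun x => by
        rw [one_mul]; exact PlanePairAux.norm_projE_le S' x
      have h2 : δ ≤ 2 := by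
        calc δ ≤ ‖P‖ + ‖Q‖ := norm_sub_le _ _
          _ ≤ 2 := by linarith
      linarith
    · -- Kato's argument: `P` restricted to `S'` is bijective onto `S`
      have hsurj : ∀ v : Euc n, v ∈ S → ∃ w ∈ S', P w = v := by
        let L : (S' : Submodule ℝ (Euc n)) →ₗ[ℝ] (S : Submodule ℝ (Euc n)) :=
          S.orthogonalProjection.toLinearMap.comp S'.subtype
        have hLapp : ∀ w : S', ((L w : Euc n)) = P (w : Euc n) := fun w => rfl
        have hinj : Function.Injective L := by
          refine (injective_iff_map_eq_zero L).2 fun w hw0 => ?_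
          have hP0 : P (w : Euc n) = 0 := by
            have h := congrArg (Subtype.val) hw0
            rw [hLapp] at h
            simpa using h
          have h1 := hBw w w.2
          rw [hP0, sub_zero] at h1
          have h2 : ‖(w : Euc n)‖ = 0 := by nlinarith [norm_nonneg (w : Euc n)]
          exact Subtype.ext (norm_eq_zero.1 h2)
        have hsur : Function.Surjective L :=
          (LinearMap.injective_iff_surjective_of_finrank_eq_finrank
            (hS'k.trans hSk.symm)).1 hinj
        intro v hv
        obtain ⟨w, hw⟩ := hsur ⟨v, hv⟩
        exact ⟨w, w.2, by rw [← hLapp, hw]⟩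
      have hQP : ‖(1 - Q) ∘L P‖ ≤ 2 * s := by
        refine ContinuousLinearMap.opNorm_le_bound _ (by positivity) fun x => ?_
        obtain ⟨w, hwS', hPw⟩ := hsurj (P x) (PlanePairAux.projE_mem S x)
        have hQw : Q w = w := PlanePairAux.projE_of_mem S' hwS'
        have h1 : ‖w - P w‖ ≤ s * ‖w‖ := hBw w hwS'
        have h2 : ‖w‖ ^ 2 = ‖P w‖ ^ 2 + ‖w - P w‖ ^ 2 := PlanePairAux.norm_sq_eq S w
        have h3 : ‖P w‖ ≤ ‖x‖ := by rw [hPw]; exact PlanePairAux.norm_projE_le S x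
        have h1sq : ‖w - P w‖ ^ 2 ≤ s ^ 2 * ‖w‖ ^ 2 := by
          nlinarith [norm_nonneg (w - P w), norm_nonneg w, hs0.le]
        have hs2 : s ^ 2 ≤ 1 / 4 := by nlinarith [hs0.le]
        have hw2 : ‖w‖ ≤ 2 * ‖P w‖ := by
          have hq : ‖w‖ ^ 2 ≤ (2 * ‖P w‖) ^ 2 := by nlinarith [sq_nonneg ‖w‖]
          exact (abs_le_of_sq_le_sq' hq (by positivity)).2
        have h4 : ((1 - Q) ∘L P) x = (P x - w) - Q (P x - w) := by
          rw [ContinuousLinearMap.comp_apply, ContinuousLinearMap.sub_apply,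
            ContinuousLinearMap.one_apply, map_sub, hQw]
          abel
        calc ‖((1 - Q) ∘L P) x‖ = ‖(P x - w) - Q (P x - w)‖ := by rw [h4]
          _ ≤ ‖P x - w‖ := PlanePairAux.norm_sub_projE_le S' _
          _ = ‖w - P w‖ := by rw [← hPw, ← norm_neg (P w - w)]; congr 1; abel
          _ ≤ s * ‖w‖ := h1
          _ ≤ s * (2 * ‖P w‖) := mul_le_mul_of_nonneg_left hw2 hs0.le
          _ ≤ 2 * s * ‖x‖ := by nlinarith [hs0.le, h3]
      calc δ ≤ ‖P ∘L (1 - Q)‖ + ‖B‖ := by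
            rw [hδdef, hdecomp]; exact norm_sub_le _ _
        _ ≤ 2 * s + s := by rw [hadj]; exact add_le_add hQP hBnorm
        _ ≤ 4 * s := by linarith
  have hinv : s⁻¹ ≤ 4 * δ⁻¹ := by
    have h1 : s⁻¹ * δ ≤ 4 := by
      calc s⁻¹ * δ ≤ s⁻¹ * (4 * s) := mul_le_mul_of_nonneg_left hcase (inv_nonneg.2 hs0.le)
        _ = 4 * (s⁻¹ * s) := by ring
        _ = 4 := by rw [inv_mul_cancel₀ hs0.ne']; ring
    calc s⁻¹ = (s⁻¹ * δ) * δ⁻¹ := by rw [mul_assoc, mul_inv_cancel₀ hδpos.ne', mul_one]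
      _ ≤ 4 * δ⁻¹ := mul_le_mul_of_nonneg_right h1 (inv_nonneg.2 hδpos.le)
  set y := Q x₀ with hy
  have hyS' : y ∈ S' := PlanePairAux.projE_mem S' x₀
  have hyle : ‖y‖ ≤ 1 := (PlanePairAux.norm_projE_le S' x₀).trans hx₀
  have hBx₀ : B x₀ = y - P y := hBapp x₀
  have hnormyPy : ‖y - P y‖ = s := by rw [hsdef, hBx₀]
  refine ⟨s⁻¹ • (y - P y), ?_, ?_, -(s⁻¹ • P y), ?_, s⁻¹ • y, ?_, ?_, ?_, ?_⟩
  · rw [norm_smul, hnormyPy, Real.norm_eq_abs, abs_of_pos (inv_pos.2 hs0),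
      inv_mul_cancel₀ hs0.ne']
  · refine Submodule.mem_inf.2 ⟨?_, ?_⟩
    · exact Submodule.smul_mem _ _ (Submodule.sub_mem _ (Submodule.mem_sup_right hyS')
        (Submodule.mem_sup_left (PlanePairAux.projE_mem S y)))
    · exact Submodule.smul_mem _ _ (PlanePairAux.sub_projE_mem_orthogonal S y)
  · exact Submodule.neg_mem _ (Submodule.smul_mem _ _ (PlanePairAux.projE_mem S y))
  · exact Submodule.smul_mem _ _ hyS'
  · rw [smul_sub]; abel
  · rw [norm_neg, norm_smul, Real.norm_eq_abs, abs_of_pos (inv_pos.2 hs0)]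
    calc s⁻¹ * ‖P y‖ ≤ s⁻¹ * 1 :=
        mul_le_mul_of_nonneg_left ((PlanePairAux.norm_projE_le S y).trans hyle)
          (inv_nonneg.2 hs0.le)
      _ = s⁻¹ := mul_one _
      _ ≤ 4 * δ⁻¹ := hinv
  · rw [norm_smul, Real.norm_eq_abs, abs_of_pos (inv_pos.2 hs0)]
    calc s⁻¹ * ‖y‖ ≤ s⁻¹ * 1 := mul_le_mul_of_nonneg_left hyle (inv_nonneg.2 hs0.le)
      _ = s⁻¹ := mul_one _
      _ ≤ 4 * δ⁻¹ := hinv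
end
end
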